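/- On a weak nearly Sasakian manifold M^{2n+1}(φ,Q,ξ,η,g) satisfying condition (4), one has g([X,Y], ξ) = 2 g((h-φ)Y, X) for all vector fields X, Y ∈ ker η; consequently the distribution ker η is integrable (i.e. [X,Y] ∈ ker η for all X, Y ∈ ker η) if and only if h = φ. -/

import Mathlib

/-- An abstract (Koszul-style) model of the algebra of smooth vector fields on a
`(2n+1)`-dimensional Riemannian manifold `M` carrying a weak nearly Sasakian
structure `(φ, Q, ξ, η, g)`: `VF` is the space of (smooth) vector fields, `fsmul`
is multiplication of a vector field by a smooth function `M → ℝ`, `lie` is the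
Lie bracket, `deriv X f` is the derivative of the function `f` in the direction of
the vector field `X`, `g` is the Riemannian metric, `cov` is its Levi-Civita
connection, and `frame` is an orthonormal frame (encoding that `dim M = 2n+1`).
The axioms are: `VF` is a module over functions, `deriv` is a derivation, `g` is a
symmetric positive definite function-bilinear form, `cov` is a torsion-free metric
connection, `φ` and `Q` are `(1,1)`-tensor fields with `Q` nonsingular, `η` is a
1-form, `φ² = -Q + η ⊗ ξ`, `η(ξ) = 1`, `Qξ = ξ`, `ker η` is `φ`-invariant,
`g(φX, φY) = g(X, QY) - η(X)η(Y)`, and the nearly Sasakian condition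
`(∇_Y φ)Y = g(Y,Y) ξ - η(Y) Y`. -/
structure WeakNearlySasakianManifold (M : Type*) (n : ℕ) where
  VF : Type*
  [instAddCommGroup : AddCommGroup VF]
  [instModule : Module ℝ VF]
  fsmul : (M → ℝ) → VF → VF
  lie : VF → VF → VF
  deriv : VF → (M → ℝ) → M → ℝ
  g : VF → VF → M → ℝ
  cov : VF → VF → VF
  phi : VF → VF
  Q : VF → VF
  xi : VF
  eta : VF → M → ℝ
  frame : Fin (2 * n + 1) → VF
  npos : 1 ≤ n
  -- `fsmul` makes `VF` a module over the smooth functions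
  fsmul_one : ∀ X, fsmul 1 X = X
  fsmul_add : ∀ f X Y, fsmul f (X + Y) = fsmul f X + fsmul f Y
  add_fsmul : ∀ f₁ f₂ X, fsmul (f₁ + f₂) X = fsmul f₁ X + fsmul f₂ X
  mul_fsmul : ∀ f₁ f₂ X, fsmul (f₁ * f₂) X = fsmul f₁ (fsmul f₂ X)
  fsmul_const : ∀ (c : ℝ) X, fsmul (fun _ => c) X = c • X
  -- `deriv` is a derivation in the function, tensorial in the vector field
  deriv_add : ∀ X f₁ f₂, deriv X (f₁ + f₂) = deriv X f₁ + deriv X f₂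
  deriv_mul : ∀ X f₁ f₂, deriv X (f₁ * f₂) = f₁ * deriv X f₂ + f₂ * deriv X f₁
  deriv_const : ∀ X (c : ℝ), deriv X (fun _ => c) = 0
  deriv_add_vf : ∀ X Y f, deriv (X + Y) f = deriv X f + deriv Y f
  deriv_fsmul : ∀ f X k, deriv (fsmul f X) k = f * deriv X k
  -- the Lie bracket
  lie_antisymm : ∀ X Y, lie X Y = -lie Y X
  lie_add_right : ∀ X Y Z, lie X (Y + Z) = lie X Y + lie X Z
  lie_leibniz : ∀ X f Y, lie X (fsmul f Y) = fsmul f (lie X Y) + fsmul (deriv X f) Y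
  -- the Riemannian metric
  g_symm : ∀ X Y, g X Y = g Y X
  g_add_left : ∀ X Y Z, g (X + Y) Z = g X Z + g Y Z
  g_fsmul_left : ∀ f X Y, g (fsmul f X) Y = f * g X Y
  g_nonneg : ∀ X p, 0 ≤ g X X p
  g_nondegenerate : ∀ X, g X X = 0 → X = 0
  -- the Levi-Civita connection
  cov_add_left : ∀ X Y Z, cov (X + Y) Z = cov X Z + cov Y Z
  cov_add_right : ∀ X Y Z, cov X (Y + Z) = cov X Y + cov X Z
  cov_fsmul_left : ∀ f X Y, cov (fsmul f X) Y = fsmul f (cov X Y)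
  cov_leibniz : ∀ f X Y, cov X (fsmul f Y) = fsmul f (cov X Y) + fsmul (deriv X f) Y
  cov_torsion_free : ∀ X Y, cov X Y - cov Y X = lie X Y
  cov_metric : ∀ X Y Z, deriv X (g Y Z) = g (cov X Y) Z + g Y (cov X Z)
  -- `φ`, `Q` are `(1,1)`-tensor fields, `Q` nonsingular, `η` is a 1-form
  phi_add : ∀ X Y, phi (X + Y) = phi X + phi Y
  phi_fsmul : ∀ f X, phi (fsmul f X) = fsmul f (phi X)
  Q_add : ∀ X Y, Q (X + Y) = Q X + Q Y
  Q_fsmul : ∀ f X, Q (fsmul f X) = fsmul f (Q X)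
  Q_bijective : Function.Bijective Q
  eta_add : ∀ X Y, eta (X + Y) = eta X + eta Y
  eta_fsmul : ∀ f X, eta (fsmul f X) = f * eta X
  -- the weak almost contact metric conditions
  phi_phi : ∀ X, phi (phi X) = -Q X + fsmul (eta X) xi
  eta_xi : eta xi = 1
  Q_xi : Q xi = xi
  phi_invariant : ∀ X, eta X = 0 → eta (phi X) = 0
  metric_compat : ∀ X Y, g (phi X) (phi Y) = g X (Q Y) - eta X * eta Y
  -- an orthonormal frame: `M` has dimension `2 * n + 1`
  frame_orthonormal : ∀ i j, g (frame i) (frame j) = fun _ => if i = j then (1 : ℝ) else 0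
  frame_spanning : ∀ X, ∃ c : Fin (2 * n + 1) → M → ℝ, X = ∑ i, fsmul (c i) (frame i)
  -- the weak nearly Sasakian condition `(∇_Y φ)Y = g(Y,Y) ξ - η(Y) Y`
  nearlySasakian : ∀ Y, cov Y (phi Y) - phi (cov Y Y) = fsmul (g Y Y) xi - fsmul (eta Y) Y

attribute [instance] WeakNearlySasakianManifold.instAddCommGroup
attribute [instance] WeakNearlySasakianManifold.instModule

namespace WeakNearlySasakianManifold

variable {M : Type*} {n : ℕ} (S : WeakNearlySasakianManifold M n)

/-- `(∇_X φ) Y` -/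
def covPhi (X Y : S.VF) : S.VF := S.cov X (S.phi Y) - S.phi (S.cov X Y)

/-- the tensor `Q̃ = Q - id` -/
def Qt (X : S.VF) : S.VF := S.Q X - X

/-- `(∇_X Q̃) Y` -/
def covQt (X Y : S.VF) : S.VF := S.cov X (S.Qt Y) - S.Qt (S.cov X Y)

/-- the tensor `h = ∇ξ + φ` -/
def h (X : S.VF) : S.VF := S.cov X S.xi + S.phi X

/-- `(∇_X h) Y` -/
def covh (X Y : S.VF) : S.VF := S.cov X (S.h Y) - S.h (S.cov X Y)

/-- the tensor `(h - φ)` -/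
def hmphi (X : S.VF) : S.VF := S.h X - S.phi X

/-- `(∇_X (h - φ)) Y` -/
def covhmphi (X Y : S.VF) : S.VF := S.cov X (S.hmphi Y) - S.hmphi (S.cov X Y)

/-- the Riemann curvature tensor `R_{X,Y} Z = ∇_X ∇_Y Z - ∇_Y ∇_X Z - ∇_{[X,Y]} Z` -/
def R (X Y Z : S.VF) : S.VF :=
  S.cov X (S.cov Y Z) - S.cov Y (S.cov X Z) - S.cov (S.lie X Y) Z

/-- Condition (4): `(∇_X Q̃) Y = 0` for every vector field `X` and every `Y ∈ ker η`. -/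
def Cond4 : Prop := ∀ X Y : S.VF, S.eta Y = 0 → S.covQt X Y = 0

/-- Condition (5): `R_{Q̃X, Y} Z ∈ ker η` for every vector field `X` and all `Y, Z ∈ ker η`. -/
def Cond5 : Prop :=
  ∀ X Y Z : S.VF, S.eta Y = 0 → S.eta Z = 0 → S.eta (S.R (S.Qt X) Y Z) = 0

/-- the trace of a `(1,1)`-tensor field -/
def trace (A : S.VF → S.VF) : M → ℝ := ∑ i, S.g (A (S.frame i)) (S.frame i)

/-- the Ricci tensor `Ric(X,Y) = Σᵢ g(R_{Eᵢ,X} Y, Eᵢ)` -/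
def Ric (X Y : S.VF) : M → ℝ := ∑ i, S.g (S.R (S.frame i) X Y) (S.frame i)

end WeakNearlySasakianManifold

namespace WeakNearlySasakianManifold

/-! Condition (4) makes `∇ξ` skew-symmetric on `ker η`. Since `∇_X Q̃` is self-adjoint and kills
`ker η`, while `(∇_X Q̃) ξ = -Q̃ ∇_X ξ` lies in `ker η`, one gets `|Q̃ ∇_X ξ|² = 0`, i.e.
`Q ∇_X ξ = ∇_X ξ`. Next, `∇_ξ` commutes with `Q` on `ker η`, so differentiating `φ² = -Q + η ⊗ ξ`
along `ξ` shows that `∇_ξ φ` anticommutes with `φ` there; the polarized nearly Sasakian identity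
gives `(∇_ξ φ) X = φ ∇_X ξ - X`, whence `φ ∇_{φX} ξ = ∇_X ξ + 2 φX`. Pairing this with `Y` and
comparing with the polarized identity paired with `ξ` yields `g(∇_X ξ, Y) + g(∇_Y ξ, X) = 0`.

As `h - φ = ∇ξ`, torsion-freeness then gives `g([X,Y], ξ) = g(X, ∇_Y ξ) - g(Y, ∇_X ξ)
= 2 g(∇_Y ξ, X)`. Taking `X = ∇_Y ξ` shows that integrability forces `∇ξ = 0` on `ker η`, and
`∇_ξ ξ = 0` extends this to all vector fields. -/

section

variable {M : Type*} {n : ℕ} (S : WeakNearlySasakianManifold M n)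

lemma zero_fsmul (X : S.VF) : S.fsmul 0 X = 0 :=
  map_zero (AddMonoidHom.mk' (S.fsmul · X) (S.add_fsmul · · X))

lemma fsmul_zero (f : M → ℝ) : S.fsmul f 0 = 0 :=
  map_zero (AddMonoidHom.mk' (S.fsmul f) (S.fsmul_add f))

lemma phi_zero : S.phi 0 = 0 := map_zero (AddMonoidHom.mk' S.phi S.phi_add)

lemma phi_neg (X : S.VF) : S.phi (-X) = -S.phi X :=
  map_neg (AddMonoidHom.mk' S.phi S.phi_add) X

lemma phi_sub (X Y : S.VF) : S.phi (X - Y) = S.phi X - S.phi Y :=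
  map_sub (AddMonoidHom.mk' S.phi S.phi_add) X Y

lemma eta_sub (X Y : S.VF) : S.eta (X - Y) = S.eta X - S.eta Y :=
  map_sub (AddMonoidHom.mk' S.eta S.eta_add) X Y

lemma eta_zero : S.eta 0 = 0 := map_zero (AddMonoidHom.mk' S.eta S.eta_add)

lemma g_neg_left (X Y : S.VF) : S.g (-X) Y = -S.g X Y :=
  map_neg (AddMonoidHom.mk' (S.g · Y) (S.g_add_left · · Y)) X

lemma g_sub_left (X Y Z : S.VF) : S.g (X - Y) Z = S.g X Z - S.g Y Z :=
  map_sub (AddMonoidHom.mk' (S.g · Z) (S.g_add_left · · Z)) X Y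

lemma g_zero_left (Y : S.VF) : S.g 0 Y = 0 :=
  map_zero (AddMonoidHom.mk' (S.g · Y) (S.g_add_left · · Y))

lemma g_add_right (X Y Z : S.VF) : S.g X (Y + Z) = S.g X Y + S.g X Z := by
  rw [S.g_symm, S.g_add_left, S.g_symm Y, S.g_symm Z]

lemma g_zero_right (X : S.VF) : S.g X 0 = 0 :=
  map_zero (AddMonoidHom.mk' (S.g X) (S.g_add_right X))

lemma g_neg_right (X Y : S.VF) : S.g X (-Y) = -S.g X Y :=
  map_neg (AddMonoidHom.mk' (S.g X) (S.g_add_right X)) Y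

lemma g_sub_right (X Y Z : S.VF) : S.g X (Y - Z) = S.g X Y - S.g X Z :=
  map_sub (AddMonoidHom.mk' (S.g X) (S.g_add_right X)) Y Z

lemma g_fsmul_right (f : M → ℝ) (X Y : S.VF) : S.g X (S.fsmul f Y) = f * S.g X Y := by
  rw [S.g_symm, S.g_fsmul_left, S.g_symm Y]

lemma cov_zero_right (X : S.VF) : S.cov X 0 = 0 :=
  map_zero (AddMonoidHom.mk' (S.cov X) (S.cov_add_right X))

lemma cov_neg_right (X Y : S.VF) : S.cov X (-Y) = -S.cov X Y :=
  map_neg (AddMonoidHom.mk' (S.cov X) (S.cov_add_right X)) Y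

lemma cov_sub_right (X Y Z : S.VF) : S.cov X (Y - Z) = S.cov X Y - S.cov X Z :=
  map_sub (AddMonoidHom.mk' (S.cov X) (S.cov_add_right X)) Y Z

lemma eta_sub_fsmul_eta_xi (X : S.VF) : S.eta (X - S.fsmul (S.eta X) S.xi) = 0 := by
  rw [S.eta_sub, S.eta_fsmul, S.eta_xi, mul_one, sub_self]

lemma eq_fsmul_eta_xi_of_phi_eq_zero {X : S.VF} (hX : S.phi X = 0) :
    X = S.fsmul (S.eta X) S.xi := by
  have hQ : S.Q X = S.fsmul (S.eta X) S.xi := by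
    have h := S.phi_phi X
    rw [hX, S.phi_zero, eq_comm, neg_add_eq_zero] at h
    exact h
  apply S.Q_bijective.1
  rw [hQ, S.Q_fsmul, S.Q_xi]

lemma phi_xi : S.phi S.xi = 0 := by
  have hφφ : S.phi (S.phi S.xi) = 0 := by
    rw [S.phi_phi, S.eta_xi, S.Q_xi, S.fsmul_one, neg_add_cancel]
  set c := S.eta (S.phi S.xi)
  have hφ : S.phi S.xi = S.fsmul c S.xi := S.eq_fsmul_eta_xi_of_phi_eq_zero hφφ
  have hcc : c * c = 0 := by
    have h := congrArg S.eta hφφ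
    rw [hφ, S.phi_fsmul, hφ, ← S.mul_fsmul, S.eta_fsmul, S.eta_xi, mul_one,
      S.eta_zero] at h
    exact h
  have hc : c = 0 := funext fun p => mul_self_eq_zero.mp (congrFun hcc p)
  rw [hφ, hc, S.zero_fsmul]

lemma g_xi (X : S.VF) : S.g X S.xi = S.eta X := by
  have h := S.metric_compat X S.xi
  rw [S.phi_xi, S.g_zero_right, S.Q_xi, S.eta_xi, mul_one, eq_comm, sub_eq_zero] at h
  exact h

lemma g_xi_xi : S.g S.xi S.xi = 1 := by rw [S.g_xi, S.eta_xi]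

lemma eta_phi (X : S.VF) : S.eta (S.phi X) = 0 := by
  have h := S.phi_invariant _ (S.eta_sub_fsmul_eta_xi X)
  rwa [S.phi_sub, S.phi_fsmul, S.phi_xi, S.fsmul_zero, sub_zero] at h

lemma g_Q_left (X Y : S.VF) : S.g (S.Q X) Y = S.g X (S.Q Y) := by
  linear_combination S.g_symm (S.Q X) Y - S.metric_compat Y X + S.metric_compat X Y
    - S.g_symm (S.phi X) (S.phi Y)

lemma Q_phi (X : S.VF) : S.Q (S.phi X) = S.phi (S.Q X) := by
  have h := congrArg S.phi (S.phi_phi X)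
  rw [S.phi_phi, S.eta_phi, S.zero_fsmul, add_zero, S.phi_add, S.phi_neg, S.phi_fsmul,
    S.phi_xi, S.fsmul_zero, add_zero] at h
  exact neg_inj.mp h

lemma g_phi_left (X Y : S.VF) : S.g (S.phi X) Y = -S.g X (S.phi Y) := by
  obtain ⟨Z, rfl⟩ := S.Q_bijective.2 Y
  have h := S.metric_compat X (S.phi Z)
  rw [S.eta_phi, mul_zero, sub_zero, S.Q_phi, S.phi_phi, S.g_add_right, S.g_neg_right,
    S.g_fsmul_right, S.g_xi, S.eta_phi, mul_zero, add_zero] at h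
  rw [← h, neg_neg]

lemma Qt_xi : S.Qt S.xi = 0 := by
  rw [Qt, S.Q_xi, sub_self]

lemma g_Qt_left (X Y : S.VF) : S.g (S.Qt X) Y = S.g X (S.Qt Y) := by
  rw [Qt, Qt, S.g_sub_left, S.g_sub_right, S.g_Q_left]

lemma eta_cov_xi (X : S.VF) : S.eta (S.cov X S.xi) = 0 := by
  have h := S.cov_metric X S.xi S.xi
  rw [S.g_xi_xi, S.g_symm S.xi] at h
  have h1 : S.deriv X 1 = 0 := S.deriv_const X 1
  have h2 : (2 : ℝ) • S.g (S.cov X S.xi) S.xi = 0 := by rw [two_smul, ← h, h1]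
  rw [← S.g_xi]
  exact (smul_eq_zero.mp h2).resolve_left two_ne_zero

lemma g_cov_xi_of_eta_eq_zero (X : S.VF) {Y : S.VF} (hY : S.eta Y = 0) :
    S.g (S.cov X Y) S.xi = -S.g Y (S.cov X S.xi) := by
  have h := S.cov_metric X Y S.xi
  have h0 : S.deriv X 0 = 0 := S.deriv_const X 0
  rw [S.g_xi, hY, h0] at h
  linear_combination -h

lemma covQt_symm (X Y Z : S.VF) : S.g (S.covQt X Y) Z = S.g Y (S.covQt X Z) := by
  rw [covQt, covQt, S.g_sub_left, S.g_sub_right, S.g_Qt_left, ← S.g_Qt_left Y (S.cov X Z)]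
  linear_combination S.cov_metric X Y (S.Qt Z) - S.cov_metric X (S.Qt Y) Z
    + congrArg (S.deriv X) (S.g_Qt_left Y Z)

lemma covPhi_add_covPhi (X Y : S.VF) : S.covPhi X Y + S.covPhi Y X =
    S.fsmul (S.g X Y) S.xi + S.fsmul (S.g Y X) S.xi
      - S.fsmul (S.eta X) Y - S.fsmul (S.eta Y) X := by
  have hXY := S.nearlySasakian (X + Y)
  simp only [S.phi_add, S.cov_add_left, S.cov_add_right, S.g_add_left, S.g_add_right,
    S.eta_add, S.add_fsmul, S.fsmul_add] at hXY
  rw [covPhi, covPhi]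
  linear_combination (norm := module) hXY - S.nearlySasakian X - S.nearlySasakian Y

lemma g_covPhi_xi (X Y : S.VF) : S.g (S.covPhi X Y) S.xi = -S.g (S.phi Y) (S.cov X S.xi) := by
  rw [covPhi, S.g_sub_left, S.g_cov_xi_of_eta_eq_zero X (S.eta_phi Y), S.g_xi, S.eta_phi,
    sub_zero]

lemma g_phi_cov_xi_add (X Y : S.VF) :
    S.g (S.phi Y) (S.cov X S.xi) + S.g (S.phi X) (S.cov Y S.xi) =
      2 * (S.eta X * S.eta Y - S.g X Y) := by
  have h := congrArg (S.g · S.xi) (S.covPhi_add_covPhi X Y)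
  simp only [S.g_add_left, S.g_sub_left, S.g_fsmul_left, S.g_covPhi_xi, S.g_xi_xi, S.g_xi]
    at h
  linear_combination -h - S.g_symm Y X

lemma cov_xi_xi : S.cov S.xi S.xi = 0 := by
  have h := S.nearlySasakian S.xi
  rw [S.g_xi_xi, S.eta_xi, S.fsmul_one, sub_self, S.phi_xi, S.cov_zero_right, zero_sub,
    neg_eq_zero] at h
  rw [S.eq_fsmul_eta_xi_of_phi_eq_zero h, S.eta_cov_xi, S.zero_fsmul]

lemma covPhi_xi_left (X : S.VF) :
    S.covPhi S.xi X = S.phi (S.cov X S.xi) + S.fsmul (S.eta X) S.xi - X := by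
  have h := S.covPhi_add_covPhi X S.xi
  rw [S.g_symm S.xi X, S.g_xi, S.eta_xi, S.fsmul_one] at h
  rw [covPhi, S.phi_xi, S.cov_zero_right, zero_sub] at h
  linear_combination (norm := module) h

lemma eta_cov_xi_left {X : S.VF} (hX : S.eta X = 0) : S.eta (S.cov S.xi X) = 0 := by
  rw [← S.g_xi, S.g_cov_xi_of_eta_eq_zero S.xi hX, S.cov_xi_xi, S.g_zero_right, neg_zero]

lemma hmphi_eq_cov_xi (X : S.VF) : S.hmphi X = S.cov X S.xi := by
  rw [hmphi, h, add_sub_cancel_right]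

lemma h_eq_phi_iff (X : S.VF) : S.h X = S.phi X ↔ S.cov X S.xi = 0 := by
  rw [h, add_eq_right]

lemma cov_xi_eq_zero_of_forall_eta_eq_zero (hker : ∀ Y, S.eta Y = 0 → S.cov Y S.xi = 0)
    (X : S.VF) : S.cov X S.xi = 0 := by
  have hX : X = (X - S.fsmul (S.eta X) S.xi) + S.fsmul (S.eta X) S.xi :=
    (sub_add_cancel _ _).symm
  rw [hX, S.cov_add_left, hker _ (S.eta_sub_fsmul_eta_xi X), S.cov_fsmul_left, S.cov_xi_xi,
    S.fsmul_zero, zero_add]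

section Cond4

variable {S}

lemma Q_cov_xi (h4 : S.Cond4) (X : S.VF) : S.Q (S.cov X S.xi) = S.cov X S.xi := by
  have hW : S.eta (S.Qt (S.cov X S.xi)) = 0 := by
    rw [← S.g_xi, S.g_Qt_left, S.Qt_xi, S.g_zero_right]
  have hξ : S.covQt X S.xi = -S.Qt (S.cov X S.xi) := by
    rw [covQt, S.Qt_xi, S.cov_zero_right, zero_sub]
  have hWW := S.covQt_symm X S.xi (S.Qt (S.cov X S.xi))
  rw [hξ, h4 X _ hW, S.g_zero_right, S.g_neg_left, neg_eq_zero] at hWW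
  exact sub_eq_zero.mp (S.g_nondegenerate _ hWW)

lemma cov_Q (h4 : S.Cond4) {X : S.VF} (hX : S.eta X = 0) (Z : S.VF) :
    S.cov Z (S.Q X) = S.Q (S.cov Z X) := by
  have h := h4 Z X hX
  rw [covQt, Qt, Qt, S.cov_sub_right, sub_sub_sub_cancel_right] at h
  exact sub_eq_zero.mp h

lemma covPhi_xi_phi_add_phi_covPhi_xi (h4 : S.Cond4) {X : S.VF} (hX : S.eta X = 0) :
    S.covPhi S.xi (S.phi X) + S.phi (S.covPhi S.xi X) = 0 := by
  have hφφX : S.phi (S.phi X) = -S.Q X := by rw [S.phi_phi, hX, S.zero_fsmul, add_zero]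
  have hφφ : S.phi (S.phi (S.cov S.xi X)) = -S.Q (S.cov S.xi X) := by
    rw [S.phi_phi, S.eta_cov_xi_left hX, S.zero_fsmul, add_zero]
  rw [covPhi, covPhi, S.phi_sub, hφφX, hφφ, S.cov_neg_right, cov_Q h4 hX]
  abel

lemma phi_cov_phi_xi (h4 : S.Cond4) {X : S.VF} (hX : S.eta X = 0) :
    S.phi (S.cov (S.phi X) S.xi) = S.cov X S.xi + S.phi X + S.phi X := by
  have h := covPhi_xi_phi_add_phi_covPhi_xi h4 hX
  rw [S.covPhi_xi_left, S.covPhi_xi_left, S.eta_phi, hX, S.zero_fsmul, add_zero, add_zero,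
    S.phi_sub, S.phi_phi, S.eta_cov_xi, S.zero_fsmul, add_zero, Q_cov_xi h4] at h
  linear_combination (norm := module) h

lemma g_cov_xi_add_g_cov_xi (h4 : S.Cond4) {X : S.VF} (hX : S.eta X = 0) (Y : S.VF) :
    S.g (S.cov X S.xi) Y + S.g (S.cov Y S.xi) X = 0 := by
  have hK := congrArg (S.g · Y) (phi_cov_phi_xi h4 hX)
  simp only [S.g_add_left, S.g_phi_left] at hK
  have hstar := S.g_phi_cov_xi_add (S.phi X) Y
  rw [S.eta_phi, zero_mul, zero_sub, S.phi_phi, hX, S.zero_fsmul, add_zero, S.g_neg_left,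
    S.g_Q_left, Q_cov_xi h4] at hstar
  linear_combination -hK - hstar + S.g_symm (S.phi Y) (S.cov (S.phi X) S.xi)
    - S.g_symm X (S.cov Y S.xi) + 2 * S.g_phi_left X Y

lemma g_lie_xi (h4 : S.Cond4) {X Y : S.VF} (hX : S.eta X = 0) (hY : S.eta Y = 0) :
    S.g (S.lie X Y) S.xi = (2 : ℝ) • S.g (S.cov Y S.xi) X := by
  rw [← S.cov_torsion_free, S.g_sub_left, S.g_cov_xi_of_eta_eq_zero X hY,
    S.g_cov_xi_of_eta_eq_zero Y hX, two_smul]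
  linear_combination -g_cov_xi_add_g_cov_xi h4 hX Y + S.g_symm X (S.cov Y S.xi)
    - S.g_symm Y (S.cov X S.xi)

lemma cov_xi_eq_zero_of_integrable (h4 : S.Cond4)
    (hint : ∀ X Y : S.VF, S.eta X = 0 → S.eta Y = 0 → S.eta (S.lie X Y) = 0)
    {Y : S.VF} (hY : S.eta Y = 0) : S.cov Y S.xi = 0 := by
  have hlie := g_lie_xi h4 (S.eta_cov_xi Y) hY
  rw [S.g_xi, hint _ _ (S.eta_cov_xi Y) hY, eq_comm, smul_eq_zero] at hlie
  exact S.g_nondegenerate _ (hlie.resolve_left two_ne_zero)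

end Cond4

end

/-- On a weak nearly Sasakian manifold satisfying condition (4),
`g([X,Y], ξ) = 2 g((h-φ)Y, X)` for all `X, Y ∈ ker η`; consequently `ker η` is
integrable if and only if `h = φ`. -/
theorem ker_eta_integrable_iff_h_eq_phi {M : Type*} {n : ℕ}
    (S : WeakNearlySasakianManifold M n) (h4 : S.Cond4) :
    (∀ X Y : S.VF, S.eta X = 0 → S.eta Y = 0 →
      S.g (S.lie X Y) S.xi = (2 : ℝ) • S.g (S.hmphi Y) X) ∧
    ((∀ X Y : S.VF, S.eta X = 0 → S.eta Y = 0 → S.eta (S.lie X Y) = 0) ↔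
      (∀ X : S.VF, S.h X = S.phi X)) := by
  refine ⟨fun X Y hX hY => ?_, fun hint X => ?_, fun hφ X Y hX hY => ?_⟩
  · rw [S.hmphi_eq_cov_xi]
    exact g_lie_xi h4 hX hY
  · rw [S.h_eq_phi_iff]
    exact S.cov_xi_eq_zero_of_forall_eta_eq_zero (fun _ => cov_xi_eq_zero_of_integrable h4 hint) X
  · rw [← S.g_xi, g_lie_xi h4 hX hY, (S.h_eq_phi_iff Y).mp (hφ Y), S.g_zero_left, smul_zero]

end WeakNearlySasakianManifold
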